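/- If every L_i is invariant under the commutant Z' of Z, then the characters χ_i are pairwise distinct: for all i ≠ j in I there exists z ∈ Z with χ_i(z) ≠ χ_j(z). (Key mechanism in the proof of Theorem 3.1 on the uniqueness of central characters: modules attached to a multiplicity-free decomposition under the commutant of the center are separated by their central characters.) -/

import Mathlib

/-!
If `χ i = χ j` on `Z` for some `i ≠ j`, pick nonzero `x ∈ L i`, `y ∈ L j` and a linear map
`f : L i → L j` with `f x = y`. The operator "project onto `L i`, apply `f`, include into `M`"
commutes with every `z ∈ Z`, because `z` acts by the same scalar on its source and target
summands. So it lies in `Z'`, yet it moves `x ∈ L i` to `y ∉ L i`.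
-/

namespace DirectSum.IsInternal

variable {R M I : Type*} [Semiring R] [AddCommMonoid M] [Module R M] [DecidableEq I]
  {L : I → Submodule R M}

noncomputable def proj (h : IsInternal L) (i : I) : M →ₗ[R] L i :=
  component R I (fun k ↦ L k) i ∘ₗ (LinearEquiv.ofBijective (coeLinearMap L) h).symm.toLinearMap

theorem proj_of_mem_same (h : IsInternal L) {i : I} {x : M} (hx : x ∈ L i) :
    h.proj i x = ⟨x, hx⟩ :=
  h.ofBijective_coeLinearMap_of_mem hx

theorem proj_of_mem_ne (h : IsInternal L) {i k : I} (hki : k ≠ i) {x : M} (hx : x ∈ L k) :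
    h.proj i x = 0 :=
  h.ofBijective_coeLinearMap_of_mem_ne hki hx

theorem linearMap_ext (h : IsInternal L) {N : Type*} [AddCommMonoid N] [Module R N]
    {f g : M →ₗ[R] N} (hfg : ∀ k, ∀ x ∈ L k, f x = g x) : f = g :=
  LinearMap.ext_on (s := ⋃ k, (L k : Set M))
    (by rw [← Submodule.iSup_eq_span, h.submodule_iSup_eq_top]) fun x hx ↦ by
      obtain ⟨k, hk⟩ := Set.mem_iUnion.mp hx
      exact hfg k x hk

theorem commute_subtype_comp_comp_proj (h : IsInternal L) {i j : I} (f : L i →ₗ[R] L j)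
    {z : Module.End R M} {c : I → R} (hz : ∀ k, ∀ x ∈ L k, z x = c k • x) (hc : c i = c j) :
    Commute ((L j).subtype ∘ₗ f ∘ₗ h.proj i) z := by
  refine h.linearMap_ext fun k x hx ↦ ?_
  simp only [Module.End.mul_apply, LinearMap.comp_apply, Submodule.subtype_apply]
  rw [hz k x hx, hz j _ (f _).2, map_smul, map_smul, Submodule.coe_smul]
  by_cases hki : k = i
  · rw [hki, hc]
  · rw [h.proj_of_mem_ne hki hx, map_zero, ZeroMemClass.coe_zero, smul_zero, smul_zero]

end DirectSum.IsInternal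

theorem central_characters_pairwise_distinct
    {M : Type*} [AddCommGroup M] [Module ℂ M]
    {I : Type*} [DecidableEq I]
    (L : I → Submodule ℂ M)
    -- each `L i` is nonzero
    (hne : ∀ i, L i ≠ ⊥)
    -- `M` is the internal direct sum of the `L i`
    (hint : DirectSum.IsInternal L)
    (Z : Set (Module.End ℂ M)) (χ : I → Module.End ℂ M → ℂ)
    -- each `z ∈ Z` acts on `L i` by the scalar `χ i z`
    (hscal : ∀ z ∈ Z, ∀ i, ∀ x ∈ L i, z x = χ i z • x)
    -- each `L i` is invariant under the commutant of `Z`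
    (hcomm : ∀ T : Module.End ℂ M, (∀ z ∈ Z, T * z = z * T) →
      ∀ i, ∀ x ∈ L i, T x ∈ L i) :
    ∀ i j, i ≠ j → ∃ z ∈ Z, χ i z ≠ χ j z := by
  intro i j hij
  by_contra! hχ
  obtain ⟨x, hxi, hx⟩ := (Submodule.ne_bot_iff _).mp (hne i)
  obtain ⟨y, hyj, hy⟩ := (Submodule.ne_bot_iff _).mp (hne j)
  obtain ⟨f, -, hfx⟩ := LinearMap.exists_extend_of_notMem
    (0 : (⊥ : Submodule ℂ (L i)) →ₗ[ℂ] L j) (v := ⟨x, hxi⟩) (by simpa using hx) ⟨y, hyj⟩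
  set T := (L j).subtype ∘ₗ f ∘ₗ hint.proj i
  have hTZ : ∀ z ∈ Z, T * z = z * T := fun z hz ↦
    hint.commute_subtype_comp_comp_proj f (hscal z hz) (hχ z hz)
  have hTx : T x = y := by simp [T, hint.proj_of_mem_same hxi, hfx]
  have hyi : y ∈ L i := hTx ▸ hcomm T hTZ i x hxi
  exact hy (Submodule.disjoint_def.mp (hint.submodule_iSupIndep.pairwiseDisjoint hij) y hyi hyj)
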